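/- arXiv:1704.04564 — 2 statements merged into one kernel-verified Lean document; each statement's English description precedes it below -/
import Mathlib

section
/- Let A, B be nonempty Borel subsets of Polish spaces and c : A × B → ℝ a Borel function with c(·,b) bounded below for each b ∈ B and c(a,·) bounded above for each a ∈ A. Suppose Assumption (Ma) holds: there exist γ_A ∈ (0,1), L_A > 0, b₀ ∈ B with −L_A + γ_A·ĉ♯(a) ≤ c⁺(a,b₀) for all a ∈ A. Then for all Borel probability measures π^A on A and π^B on B: γ_A · ∫_A ∫_B c⁺(a,b) π^B(db) π^A(da) ≤ ĉ♯(π^A) + L_A − min{0, ĉ♭(b₀)}, where ĉ♯(π^A) := sup_{b∈B} ∫_A c(a,b) π^A(da) and ĉ♭(b₀) := inf_{a∈A} c(a,b₀). In particular, if ĉ♯(π^A) < +∞, then ∫∫ c⁺ dπ^B dπ^A < +∞ for every π^B, so π^A is a safe strategy. -/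
open MeasureTheory Classical
open scoped ENNReal

/-- Extended integral of `c(·,b)`, equal to `+∞` when not integrable. -/
noncomputable def extIntegral {A : Type*} [MeasurableSpace A]
    (c : A → ℝ) (π : Measure A) : EReal :=
  if Integrable c π then ((∫ a, c a ∂π : ℝ) : EReal) else ⊤

/-!
Integrating `c⁺(a, ·) ≤ (sup_b c(a, b))⁺` against `π^B` and then (Ma) against `π^A` gives
`γ_A ∫∫ c⁺ ≤ L_A + ∫ c⁺(·, b₀) dπ^A`. Since `c(·, b₀) ≥ ĉ♭(b₀)`, the positive part `c⁺(·, b₀)` is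
dominated by `c(·, b₀) - min{0, ĉ♭(b₀)}`, whose integral is at most `ĉ♯(π^A) - min{0, ĉ♭(b₀)}`.
Finiteness of `ĉ♯(π^A)` then bounds `∫∫ c⁺` because `γ_A > 0`.
-/

open Set

lemma EReal.coe_min (x y : ℝ) : ((min x y : ℝ) : EReal) = min (x : EReal) y :=
  EReal.coe_strictMono.monotone.map_min

section
variable {α : Type*} [MeasurableSpace α] {μ : Measure α} [IsProbabilityMeasure μ] {f : α → ℝ}

lemma lintegral_ofReal_le_ofReal_ciSup (hf : BddAbove (range f)) :
    ∫⁻ x, ENNReal.ofReal (f x) ∂μ ≤ ENNReal.ofReal (⨆ x, f x) :=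
  (lintegral_mono fun x => ENNReal.ofReal_le_ofReal (le_ciSup hf x)).trans_eq (by simp)

lemma coe_lintegral_ofReal_le_extIntegral_sub (hf : BddBelow (range f)) :
    ((∫⁻ x, ENNReal.ofReal (f x) ∂μ : ℝ≥0∞) : EReal) ≤
      extIntegral f μ - min 0 ((⨅ x, f x : ℝ) : EReal) := by
  set m := min 0 (⨅ x, f x)
  rw [← EReal.coe_zero, ← EReal.coe_min]
  by_cases hint : Integrable f μ
  case neg => simp [extIntegral, hint]
  have hfm : ∀ x, 0 ≤ f x - m := fun x => sub_nonneg.2 ((min_le_right _ _).trans (ciInf_le hf x))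
  calc ((∫⁻ x, ENNReal.ofReal (f x) ∂μ : ℝ≥0∞) : EReal)
      ≤ ((∫⁻ x, ENNReal.ofReal (f x - m) ∂μ : ℝ≥0∞) : EReal) :=
        EReal.coe_ennreal_le_coe_ennreal_iff.2 <| lintegral_mono fun x =>
          ENNReal.ofReal_le_ofReal (by linarith [min_le_left 0 (⨅ x, f x)])
    _ = ((∫ x, (f x - m) ∂μ : ℝ) : EReal) := by
        rw [← ofReal_integral_eq_lintegral_ofReal (f := fun x => f x - m)
          (hint.sub (integrable_const m)) (.of_forall hfm), EReal.coe_ennreal_ofReal,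
          max_eq_left (integral_nonneg hfm)]
    _ = extIntegral f μ - m := by
        rw [integral_sub hint (integrable_const m), extIntegral, if_pos hint]; simp
end

section
variable {A B : Type*} [MeasurableSpace A] [MeasurableSpace B] {c : A → B → ℝ} {γ L : ℝ}
  {b₀ : B} (πA : Measure A) (πB : Measure B) [IsProbabilityMeasure πA] [IsProbabilityMeasure πB]

lemma ofReal_mul_lintegral_lintegral_le (hub : ∀ a, BddAbove (range (c a))) (hγ : 0 ≤ γ)
    (hMa : ∀ a, -L + γ * (⨆ b, c a b) ≤ max (c a b₀) 0) :
    ENNReal.ofReal γ * ∫⁻ a, ∫⁻ b, ENNReal.ofReal (max (c a b) 0) ∂πB ∂πA ≤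
      ENNReal.ofReal L + ∫⁻ a, ENNReal.ofReal (c a b₀) ∂πA := by
  have hpoint : ∀ a, ENNReal.ofReal γ * ENNReal.ofReal (⨆ b, c a b) ≤
      ENNReal.ofReal L + ENNReal.ofReal (c a b₀) := fun a =>
    calc ENNReal.ofReal γ * ENNReal.ofReal (⨆ b, c a b)
        ≤ ENNReal.ofReal (L + max (c a b₀) 0) := by
          rw [← ENNReal.ofReal_mul hγ]; exact ENNReal.ofReal_le_ofReal (by linarith [hMa a])
      _ ≤ ENNReal.ofReal L + ENNReal.ofReal (max (c a b₀) 0) := ENNReal.ofReal_add_le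
      _ = ENNReal.ofReal L + ENNReal.ofReal (c a b₀) := by simp
  calc ENNReal.ofReal γ * ∫⁻ a, ∫⁻ b, ENNReal.ofReal (max (c a b) 0) ∂πB ∂πA
      ≤ ENNReal.ofReal γ * ∫⁻ a, ENNReal.ofReal (⨆ b, c a b) ∂πA := by
        simp only [ENNReal.ofReal_max, ENNReal.ofReal_zero, max_zero]
        gcongr with a
        exact lintegral_ofReal_le_ofReal_ciSup (hub a)
    _ = ∫⁻ a, ENNReal.ofReal γ * ENNReal.ofReal (⨆ b, c a b) ∂πA :=
        (lintegral_const_mul' _ _ ENNReal.ofReal_ne_top).symm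
    _ ≤ ∫⁻ a, (ENNReal.ofReal L + ENNReal.ofReal (c a b₀)) ∂πA := lintegral_mono hpoint
    _ = ENNReal.ofReal L + ∫⁻ a, ENNReal.ofReal (c a b₀) ∂πA := by
        rw [lintegral_add_left measurable_const]; simp

lemma coe_mul_lintegral_lintegral_le (hlb : BddBelow (range (c · b₀)))
    (hub : ∀ a, BddAbove (range (c a))) (hγ : 0 ≤ γ) (hL : 0 ≤ L)
    (hMa : ∀ a, -L + γ * (⨆ b, c a b) ≤ max (c a b₀) 0) :
    (γ : EReal) * ((∫⁻ a, ∫⁻ b, ENNReal.ofReal (max (c a b) 0) ∂πB ∂πA : ℝ≥0∞) : EReal) ≤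
      (⨆ b, extIntegral (c · b) πA) + (L : EReal) - min 0 ((⨅ a, c a b₀ : ℝ) : EReal) := by
  set m := min 0 ((⨅ a, c a b₀ : ℝ) : EReal)
  calc (γ : EReal) * ((∫⁻ a, ∫⁻ b, ENNReal.ofReal (max (c a b) 0) ∂πB ∂πA : ℝ≥0∞) : EReal)
      = ((ENNReal.ofReal γ * ∫⁻ a, ∫⁻ b, ENNReal.ofReal (max (c a b) 0) ∂πB ∂πA : ℝ≥0∞) :
          EReal) := by
        rw [EReal.coe_ennreal_mul, EReal.coe_ennreal_ofReal, max_eq_left hγ]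
    _ ≤ ((ENNReal.ofReal L + ∫⁻ a, ENNReal.ofReal (c a b₀) ∂πA : ℝ≥0∞) : EReal) :=
        EReal.coe_ennreal_le_coe_ennreal_iff.2 (ofReal_mul_lintegral_lintegral_le πA πB hub hγ hMa)
    _ = L + ((∫⁻ a, ENNReal.ofReal (c a b₀) ∂πA : ℝ≥0∞) : EReal) := by
        rw [EReal.coe_ennreal_add, EReal.coe_ennreal_ofReal, max_eq_left hL]
    _ ≤ L + (extIntegral (c · b₀) πA - m) :=
        add_le_add le_rfl (coe_lintegral_ofReal_le_extIntegral_sub hlb)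
    _ ≤ L + ((⨆ b, extIntegral (c · b) πA) - m) :=
        add_le_add le_rfl (EReal.sub_le_sub (le_iSup (fun b => extIntegral (c · b) πA) b₀) le_rfl)
    _ = (⨆ b, extIntegral (c · b) πA) + L - m := by simp only [sub_eq_add_neg]; ac_rfl

lemma lintegral_lintegral_lt_top (hlb : BddBelow (range (c · b₀)))
    (hub : ∀ a, BddAbove (range (c a))) (hγ : 0 < γ) (hL : 0 ≤ L)
    (hMa : ∀ a, -L + γ * (⨆ b, c a b) ≤ max (c a b₀) 0)
    (hsup : (⨆ b, extIntegral (c · b) πA) < ⊤) :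
    ∫⁻ a, ∫⁻ b, ENNReal.ofReal (max (c a b) 0) ∂πB ∂πA < ⊤ := by
  have hbound := coe_mul_lintegral_lintegral_le πA πB hlb hub hγ.le hL hMa
  have hrhs : (⨆ b, extIntegral (c · b) πA) + L - min 0 ((⨅ a, c a b₀ : ℝ) : EReal) < ⊤ := by
    rw [← EReal.coe_zero, ← EReal.coe_min, sub_eq_add_neg, ← EReal.coe_neg]
    exact EReal.add_lt_top (EReal.add_lt_top hsup.ne (EReal.coe_ne_top L)).ne (EReal.coe_ne_top _)
  by_contra! htop
  rw [top_le_iff.1 htop, EReal.coe_ennreal_top, EReal.coe_mul_top_of_pos hγ] at hbound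
  exact (hbound.trans_lt hrhs).ne rfl
end

theorem Ma_safe_strategies_general
    {A B : Type*} [MeasurableSpace A] [MeasurableSpace B]
    (c : A → B → ℝ)
    (hlb : ∀ b : B, ∃ m : ℝ, ∀ a : A, m ≤ c a b)
    (hub : ∀ a : A, ∃ M : ℝ, ∀ b : B, c a b ≤ M)
    (γA LA : ℝ) (hγ0 : 0 < γA) (hLA : 0 < LA) (b₀ : B)
    (hMa : ∀ a : A, -LA + γA * (⨆ b : B, c a b) ≤ max (c a b₀) 0) :
    (∀ (πA : Measure A) (πB : Measure B),
        IsProbabilityMeasure πA → IsProbabilityMeasure πB →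
        ((γA : ℝ) : EReal) *
            ((∫⁻ a, ∫⁻ b, ENNReal.ofReal (max (c a b) 0) ∂πB ∂πA : ℝ≥0∞) : EReal) ≤
          (⨆ b : B, extIntegral (fun a => c a b) πA) + ((LA : ℝ) : EReal)
            - min 0 ((⨅ a : A, c a b₀ : ℝ) : EReal)) ∧
    (∀ πA : Measure A, IsProbabilityMeasure πA →
        (⨆ b : B, extIntegral (fun a => c a b) πA) < ⊤ →
        ∀ πB : Measure B, IsProbabilityMeasure πB →
          (∫⁻ a, ∫⁻ b, ENNReal.ofReal (max (c a b) 0) ∂πB ∂πA) < ⊤) := by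
  have hlb₀ : BddBelow (range (c · b₀)) :=
    let ⟨m, hm⟩ := hlb b₀; ⟨m, forall_mem_range.2 hm⟩
  have hub' : ∀ a, BddAbove (range (c a)) := fun a =>
    let ⟨M, hM⟩ := hub a; ⟨M, forall_mem_range.2 hM⟩
  exact ⟨fun πA πB _ _ => coe_mul_lintegral_lintegral_le πA πB hlb₀ hub' hγ0.le hLA.le hMa,
    fun πA _ hsup πB _ => lintegral_lintegral_lt_top πA πB hlb₀ hub' hγ0 hLA.le hMa hsup⟩

/-- Corollary 3.9: under Assumption (Ma),
`γ_A ∫∫ c⁺ dπ^B dπ^A ≤ ĉ♯(π^A) + L_A − min{0, ĉ♭(b₀)}` for all probability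
measures `π^A`, `π^B`; in particular if `ĉ♯(π^A) < +∞` then `π^A` is safe. -/
theorem Ma_safe_strategies
    {A B : Type*} [MeasurableSpace A] [MeasurableSpace B]
    [TopologicalSpace A] [PolishSpace A] [BorelSpace A]
    [TopologicalSpace B] [PolishSpace B] [BorelSpace B]
    [Nonempty A] [Nonempty B]
    (c : A → B → ℝ) (hc : Measurable (Function.uncurry c))
    (hlb : ∀ b : B, ∃ m : ℝ, ∀ a : A, m ≤ c a b)
    (hub : ∀ a : A, ∃ M : ℝ, ∀ b : B, c a b ≤ M)
    (γA LA : ℝ) (hγ0 : 0 < γA) (hγ1 : γA < 1) (hLA : 0 < LA) (b₀ : B)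
    (hMa : ∀ a : A, -LA + γA * (⨆ b : B, c a b) ≤ max (c a b₀) 0) :
    (∀ (πA : Measure A) (πB : Measure B),
        IsProbabilityMeasure πA → IsProbabilityMeasure πB →
        ((γA : ℝ) : EReal) *
            ((∫⁻ a, ∫⁻ b, ENNReal.ofReal (max (c a b) 0) ∂πB ∂πA : ℝ≥0∞) : EReal) ≤
          (⨆ b : B, extIntegral (fun a => c a b) πA) + ((LA : ℝ) : EReal)
            - min 0 ((⨅ a : A, c a b₀ : ℝ) : EReal)) ∧
    (∀ πA : Measure A, IsProbabilityMeasure πA →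
        (⨆ b : B, extIntegral (fun a => c a b) πA) < ⊤ →
        ∀ πB : Measure B, IsProbabilityMeasure πB →
          (∫⁻ a, ∫⁻ b, ENNReal.ofReal (max (c a b) 0) ∂πB ∂πA) < ⊤) :=
  Ma_safe_strategies_general c hlb hub γA LA hγ0 hLA b₀ hMa
end

section
/- Let X and Y be metric spaces, Φ : X → 2^Y a set-valued mapping with nonempty domain, and f : Gr(Φ) → ℝ∪{±∞}. If f is lower semi-continuous on Gr(Φ) and Φ is upper semi-continuous and compact-valued at each point of its domain, then f is K-inf-compact on Gr(Φ): for every compact set C ⊆ Dom Φ, the restriction of f to Gr_C(Φ) := {(x,y) : x ∈ C, y ∈ Φ(x)} has compact sublevel sets {(x,y) ∈ Gr_C(Φ) : f(x,y) ≤ λ} for every λ ∈ ℝ. -/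
/-!
Over a compact set `C`, the graph of an upper hemicontinuous compact-valued map is compact: an
ultrafilter on it projects to an ultrafilter on `C` converging to some `x`, and upper
hemicontinuity pushes its second projection into every neighbourhood of the compact set `Φ x`,
where it must converge. A sublevel set of a lower semicontinuous function is relatively closed,
hence compact, inside this compact graph.
-/

open Filter Topology Set

theorem IsCompact.ultrafilter_le_nhds_of_le_nhdsSet {Y : Type*} [TopologicalSpace Y] {K : Set Y}
    (hK : IsCompact K) (F : Ultrafilter Y) (hF : ↑F ≤ 𝓝ˢ K) : ∃ y ∈ K, ↑F ≤ 𝓝 y := by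
  have hnot : ¬Disjoint (𝓝ˢ K) (F : Filter Y) := fun h =>
    F.neBot.ne (disjoint_self.mp (h.mono_left hF))
  obtain ⟨y, hy, hdisj⟩ : ∃ y ∈ K, ¬Disjoint (𝓝 y) (F : Filter Y) := by
    simpa [hK.disjoint_nhdsSet_left] using hnot
  exact ⟨y, hy, Ultrafilter.clusterPt_iff.mp (clusterPt_iff_not_disjoint.mpr hdisj)⟩

theorem IsCompact.graph_of_upperHemicontinuousAt {X Y : Type*} [TopologicalSpace X]
    [TopologicalSpace Y] {Φ : X → Set Y} {C : Set X} (hC : IsCompact C)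
    (hΦ : ∀ x ∈ C, UpperHemicontinuousAt Φ x) (hΦK : ∀ x ∈ C, IsCompact (Φ x)) :
    IsCompact {p : X × Y | p.1 ∈ C ∧ p.2 ∈ Φ p.1} := by
  rw [isCompact_iff_ultrafilter_le_nhds]
  intro F hF
  have hFgraph : ∀ᶠ p in (F : Filter (X × Y)), p.1 ∈ C ∧ p.2 ∈ Φ p.1 := le_principal_iff.mp hF
  obtain ⟨x, hxC, hx⟩ := isCompact_iff_ultrafilter_le_nhds.mp hC (F.map Prod.fst)
    (le_principal_iff.mpr (hFgraph.mono fun _ hp => hp.1))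
  have hsnd : Tendsto Prod.snd (F : Filter (X × Y)) (𝓝ˢ (Φ x)) := fun t ht => mem_map.mpr <| by
    filter_upwards [hx (upperHemicontinuousAt_iff.mp (hΦ x hxC) t ht), hFgraph] with p hpt hp
    exact subset_of_mem_nhdsSet hpt hp.2
  obtain ⟨y, hy, hy_lim⟩ := (hΦK x hxC).ultrafilter_le_nhds_of_le_nhdsSet (F.map Prod.snd) hsnd
  refine ⟨(x, y), ⟨hxC, hy⟩, ?_⟩
  rw [nhds_prod_eq]
  exact le_prod.mpr ⟨hx, hy_lim⟩

theorem K_inf_compact_of_usc_compact_valued_general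
    {X Y : Type*} [MetricSpace X] [MetricSpace Y]
    (Φ : X → Set Y)
    (f : X × Y → EReal)
    (hf : LowerSemicontinuousOn f {p : X × Y | p.2 ∈ Φ p.1})
    (husc : ∀ x ∈ {x : X | (Φ x).Nonempty}, ∀ G : Set Y, IsOpen G → Φ x ⊆ G →
        ∃ U ∈ nhds x, ∀ x' ∈ U ∩ {x : X | (Φ x).Nonempty}, Φ x' ⊆ G)
    (hcv : ∀ x ∈ {x : X | (Φ x).Nonempty}, IsCompact (Φ x)) :
    ∀ C : Set X, C.Nonempty → IsCompact C → C ⊆ {x : X | (Φ x).Nonempty} →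
      ∀ lam : ℝ,
        IsCompact {p : X × Y | p.1 ∈ C ∧ p.2 ∈ Φ p.1 ∧ f p ≤ (lam : EReal)} := by
  intro C _ hC hCdom lam
  have hΦ : ∀ x ∈ C, UpperHemicontinuousAt Φ x := fun x hx =>
    .of_forall_isOpen fun G hG hxG => by
      obtain ⟨U, hU, hUG⟩ := husc x (hCdom hx) G hG hxG
      filter_upwards [hU] with x' hx'
      rcases (Φ x').eq_empty_or_nonempty with hempty | hne
      · simp [hempty]
      · exact hUG x' ⟨hx', hne⟩
  have hgraph := hC.graph_of_upperHemicontinuousAt hΦ fun x hx => hcv x (hCdom hx)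
  have hsublevel : {p : X × Y | p.1 ∈ C ∧ p.2 ∈ Φ p.1 ∧ f p ≤ (lam : EReal)} =
      {p : X × Y | p.1 ∈ C ∧ p.2 ∈ Φ p.1} ∩ f ⁻¹' Iic (lam : EReal) := by
    ext; simp [and_assoc]
  rw [hsublevel]
  exact (hf.mono fun _ hp => hp.2).isCompact_inter_preimage_Iic hgraph (lam : EReal)

/-- Lemma A.6(b): if `f` is lower semi-continuous on `Gr(Φ)` and `Φ` is upper
semi-continuous and compact-valued at each point of its domain, then `f` is
K-inf-compact on `Gr(Φ)`. -/
theorem K_inf_compact_of_usc_compact_valued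
    {X Y : Type*} [MetricSpace X] [MetricSpace Y]
    (Φ : X → Set Y) (hdom : {x : X | (Φ x).Nonempty}.Nonempty)
    (f : X × Y → EReal)
    (hf : LowerSemicontinuousOn f {p : X × Y | p.2 ∈ Φ p.1})
    (husc : ∀ x ∈ {x : X | (Φ x).Nonempty}, ∀ G : Set Y, IsOpen G → Φ x ⊆ G →
        ∃ U ∈ nhds x, ∀ x' ∈ U ∩ {x : X | (Φ x).Nonempty}, Φ x' ⊆ G)
    (hcv : ∀ x ∈ {x : X | (Φ x).Nonempty}, IsCompact (Φ x)) :
    ∀ C : Set X, C.Nonempty → IsCompact C → C ⊆ {x : X | (Φ x).Nonempty} →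
      ∀ lam : ℝ,
        IsCompact {p : X × Y | p.1 ∈ C ∧ p.2 ∈ Φ p.1 ∧ f p ≤ (lam : EReal)} :=
  K_inf_compact_of_usc_compact_valued_general Φ f hf husc hcv
end
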